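/- Let Φ be a finite reduced crystallographic root system with base S in a finite-dimensional real inner product space, let Sᵖ ⊆ S, let Φᵖ := Φ ∩ ℤSᵖ, and let ρ and ρᵖ be the half-sums of the positive roots of Φ and of Φᵖ respectively (positivity taken with respect to S). Then for every root α ∈ Φ, if ⟨ρ − ρᵖ | α∨⟩ = 0 then α ∈ Φᵖ. -/

import Mathlib

open RealInnerProductSpace

variable {V : Type*} [NormedAddCommGroup V] [InnerProductSpace ℝ V]

/-- The pairing `⟨x | v∨⟩ = 2(x,v)/(v,v)` of a vector against the "coroot" of `v`. -/
noncomputable def pairR (x v : V) : ℝ := 2 * ⟪x, v⟫ / ⟪v, v⟫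

/-- The reflection `s_v(x) = x - ⟨x|v∨⟩ v` in the nonzero vector `v`. -/
noncomputable def reflV (v x : V) : V := x - pairR x v • v

/-- A finite reduced crystallographic root system in a real inner product space:
a finite set of nonzero vectors, closed under all of its reflections, with integral
Cartan numbers, such that the only multiples of a root `α` that are roots are `±α`. -/
def IsRootSystem (Φ : Set V) : Prop :=
  Φ.Finite ∧
  (0 : V) ∉ Φ ∧
  (∀ α ∈ Φ, ∀ β ∈ Φ, reflV α β ∈ Φ) ∧
  (∀ α ∈ Φ, ∀ β ∈ Φ, ∃ n : ℤ, pairR β α = (n : ℝ)) ∧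
  (∀ α ∈ Φ, ∀ c : ℝ, c • α ∈ Φ → c • α = α ∨ c • α = -α)

/-- `S` is a base of `Φ`: a linearly independent subset spanning the span of `Φ`
such that every element of `Φ` is an integral linear combination of `S` with
coefficients all of the same sign. -/
def IsBase (Φ S : Set V) : Prop :=
  S ⊆ Φ ∧
  LinearIndependent ℝ ((↑) : S → V) ∧
  Submodule.span ℝ S = Submodule.span ℝ Φ ∧
  ∀ α ∈ Φ, ∃ c : V →₀ ℤ,
    (↑c.support : Set V) ⊆ S ∧
    α = c.sum (fun v n => (n : ℝ) • v) ∧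
    ((∀ v, 0 ≤ c v) ∨ (∀ v, c v ≤ 0))

/-- The positive elements with respect to a base `S`: nonnegative integral
combinations of `S`. -/
def IsPositive (S : Set V) (α : V) : Prop :=
  ∃ c : V →₀ ℤ,
    (↑c.support : Set V) ⊆ S ∧
    α = c.sum (fun v n => (n : ℝ) • v) ∧
    (∀ v, 0 ≤ c v)

/-- `Ψ` is a root subsystem of `Φ`: a nonempty subset stable under its own reflections. -/
def IsRootSubsystem (Φ Ψ : Set V) : Prop :=
  Ψ ⊆ Φ ∧ Ψ.Nonempty ∧ ∀ ψ ∈ Ψ, ∀ x ∈ Ψ, reflV ψ x ∈ Ψ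

/-- `Ψ` is additively closed in `Φ` : `Ψ = Φ ∩ ℤΨ`. -/
def IsAddClosedIn (Φ Ψ : Set V) : Prop :=
  Ψ = Φ ∩ (Submodule.span ℤ Ψ : Set V)

/-- The half-sum of the elements of `Φ` that are positive with respect to `S`. -/
noncomputable def halfSumPos (Φ S : Set V) : V :=
  (2⁻¹ : ℝ) • ∑ᶠ α ∈ {α ∈ Φ | IsPositive S α}, α


/-!
Write `Δ = ρ - ρᵖ`. A simple root `s` permutes the positive roots other than itself and sends `s`
to `-s`, so `⟨ρ | s∨⟩ = 1`; since `Φᵖ` is stable under the reflections in `Sᵖ`, likewise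
`⟨ρᵖ | s∨⟩ = 1` for `s ∈ Sᵖ`. For `s ∈ S \ Sᵖ`, every positive root of `Φᵖ` is a nonnegative
combination of `Sᵖ`, and distinct simple roots make obtuse angles, so `(ρᵖ, s) ≤ 0`. Hence
`(Δ, s)` vanishes on `Sᵖ` and is positive on `S \ Sᵖ`. Writing `α = Σ cₛ s` with coefficients of
one sign, `(Δ, α) = Σ cₛ (Δ, s) = 0` forces `cₛ = 0` for all `s ∉ Sᵖ`, i.e. `α ∈ ℤSᵖ`.
-/

open Finsupp (linearCombination supported)

section Reflection

variable {x v : V}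

lemma pairR_self (hv : v ≠ 0) : pairR v v = 2 := by
  rw [pairR, div_eq_iff (inner_self_ne_zero.mpr hv)]

lemma pairR_eq_zero_iff (hv : v ≠ 0) : pairR x v = 0 ↔ ⟪x, v⟫ = 0 := by
  simp [pairR, hv]

lemma pairR_pos_iff (hv : v ≠ 0) : 0 < pairR x v ↔ 0 < ⟪x, v⟫ := by
  rw [pairR, div_pos_iff_of_pos_right (real_inner_self_pos.mpr hv), mul_pos_iff_of_pos_left two_pos]

lemma pairR_sub (y : V) : pairR (x - y) v = pairR x v - pairR y v := by
  simp only [pairR, inner_sub_left]; ring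

lemma pairR_smul (c : ℝ) : pairR (c • x) v = c * pairR x v := by
  simp only [pairR, real_inner_smul_left]; ring

lemma pairR_sum {ι : Type*} (T : Finset ι) (f : ι → V) :
    pairR (∑ i ∈ T, f i) v = ∑ i ∈ T, pairR (f i) v := by
  simp only [pairR, sum_inner, Finset.mul_sum, Finset.sum_div]

lemma pairR_reflV (hv : v ≠ 0) : pairR (reflV v x) v = -pairR x v := by
  rw [reflV, pairR_sub, pairR_smul, pairR_self hv]; ring

lemma reflV_reflV (hv : v ≠ 0) : reflV v (reflV v x) = x := by
  nth_rw 1 [reflV]; rw [pairR_reflV hv, reflV]; module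

lemma reflV_eq_self_iff (hv : v ≠ 0) : reflV v x = x ↔ pairR x v = 0 := by
  simp [reflV, hv]

/-- The terms other than `v` cancel in pairs `β, reflV v β`, as `reflV v` negates `⟨· | v∨⟩`. -/
lemma pairR_sum_eq_two (T : Finset V) (hv : v ≠ 0) (hvT : v ∈ T)
    (hT : ∀ β ∈ T, β ≠ v → reflV v β ∈ T ∧ reflV v β ≠ v) :
    pairR (∑ β ∈ T, β) v = 2 := by
  classical
  have hrest : ∑ β ∈ T.erase v, pairR β v = 0 := by
    refine Finset.sum_involution (fun β _ => reflV v β) (fun β _ => by rw [pairR_reflV hv]; ring)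
      (fun β _ hβ => mt (reflV_eq_self_iff hv).mp hβ) (fun β hβ => ?_)
      (fun β _ => reflV_reflV hv)
    obtain ⟨hβT, hβv⟩ := hT β (Finset.mem_of_mem_erase hβ) (Finset.ne_of_mem_erase hβ)
    exact Finset.mem_erase.mpr ⟨hβv, hβT⟩
  rw [pairR_sum, ← Finset.add_sum_erase T _ hvT, hrest, pairR_self hv, add_zero]

end Reflection

lemma sum_intCast_smul_eq_linearCombination {M : Type*} [AddCommGroup M] [Module ℝ M]
    (c : M →₀ ℤ) :
    c.sum (fun v n => (n : ℝ) • v) = linearCombination ℤ id c := by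
  simp [Finsupp.linearCombination_apply, Int.cast_smul_eq_zsmul]

lemma mem_span_int_iff {M : Type*} [AddCommGroup M] {A : Set M} {x : M} :
    x ∈ Submodule.span ℤ A ↔ ∃ c ∈ supported ℤ ℤ A, linearCombination ℤ id c = x := by
  rw [← Finsupp.mem_span_image_iff_linearCombination, Set.image_id]

lemma inner_linearCombination_right (y : V) (c : V →₀ ℤ) :
    ⟪y, linearCombination ℤ id c⟫ = c.sum (fun v n => n * ⟪y, v⟫) := by
  rw [← sum_intCast_smul_eq_linearCombination, Finsupp.sum, inner_sum]
  simp [real_inner_smul_right, Finsupp.sum]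

lemma IsPositive.exists_coeff {S : Set V} {β : V} (hβ : IsPositive S β) :
    ∃ c ∈ supported ℤ ℤ S, linearCombination ℤ id c = β ∧ ∀ v, 0 ≤ c v := by
  obtain ⟨c, hcS, hβc, hc⟩ := hβ
  exact ⟨c, (Finsupp.mem_supported ℤ c).mpr hcS,
    by rw [hβc, sum_intCast_smul_eq_linearCombination], hc⟩

section RootSystem

variable {Φ S : Set V}

lemma IsRootSystem.ne_zero (hΦ : IsRootSystem Φ) {α : V} (hα : α ∈ Φ) : α ≠ 0 :=
  fun h => hΦ.2.1 (h ▸ hα)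

lemma IsRootSystem.reflV_mem_inter_span (hΦ : IsRootSystem Φ) {A : Set V} {s β : V}
    (hs : s ∈ Φ ∩ (Submodule.span ℤ A : Set V)) (hβ : β ∈ Φ ∩ (Submodule.span ℤ A : Set V)) :
    reflV s β ∈ Φ ∩ (Submodule.span ℤ A : Set V) := by
  obtain ⟨n, hn⟩ := hΦ.2.2.2.1 s hs.1 β hβ.1
  refine ⟨hΦ.2.2.1 s hs.1 β hβ.1, ?_⟩
  rw [SetLike.mem_coe, reflV, hn, Int.cast_smul_eq_zsmul]
  exact sub_mem hβ.2 (zsmul_mem hs.2 n)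

namespace IsBase

lemma linearCombination_injOn (hS : IsBase Φ S) :
    Set.InjOn (linearCombination ℤ id) (supported ℤ ℤ S : Set (V →₀ ℤ)) :=
  linearIndepOn_iffₛ.mp (hS.2.1.restrict_scalars' ℤ)

lemma exists_coeff (hS : IsBase Φ S) {α : V} (hα : α ∈ Φ) :
    ∃ c ∈ supported ℤ ℤ S, linearCombination ℤ id c = α ∧ ((∀ v, 0 ≤ c v) ∨ ∀ v, c v ≤ 0) := by
  obtain ⟨c, hcS, hαc, hsign⟩ := hS.2.2.2 α hα
  exact ⟨c, (Finsupp.mem_supported ℤ c).mpr hcS,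
    by rw [hαc, sum_intCast_smul_eq_linearCombination], hsign⟩

lemma coeff_nonneg_of_pos (hS : IsBase Φ S) {c : V →₀ ℤ} (hc : c ∈ supported ℤ ℤ S)
    (hcΦ : linearCombination ℤ id c ∈ Φ) {v : V} (hv : 0 < c v) (w : V) : 0 ≤ c w := by
  obtain ⟨d, hd, hdc, hsign⟩ := hS.exists_coeff hcΦ
  obtain rfl := hS.linearCombination_injOn hd hc hdc
  exact hsign.resolve_right (fun h => (h v).not_gt hv) w

lemma isPositive_of_coeff_pos (hS : IsBase Φ S) {c : V →₀ ℤ} (hc : c ∈ supported ℤ ℤ S)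
    (hcΦ : linearCombination ℤ id c ∈ Φ) {v : V} (hv : 0 < c v) :
    IsPositive S (linearCombination ℤ id c) :=
  ⟨c, (Finsupp.mem_supported ℤ c).mp hc, (sum_intCast_smul_eq_linearCombination c).symm,
    hS.coeff_nonneg_of_pos hc hcΦ hv⟩

lemma isPositive_of_mem (hS : IsBase Φ S) {s : V} (hs : s ∈ S) : IsPositive S s := by
  simpa using hS.isPositive_of_coeff_pos (Finsupp.single_mem_supported ℤ 1 hs)
    (by simpa using hS.1 hs) (v := s) (by simp)

/-- If `⟪s, t⟫ > 0` then `reflV t s = s - n • t` with `n > 0` would be a root with coefficients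
of both signs. -/
lemma inner_nonpos (hΦ : IsRootSystem Φ) (hS : IsBase Φ S) {s t : V} (hs : s ∈ S) (ht : t ∈ S)
    (hst : s ≠ t) : ⟪s, t⟫ ≤ 0 := by
  classical
  by_contra! hpos
  obtain ⟨n, hn⟩ := hΦ.2.2.2.1 t (hS.1 ht) s (hS.1 hs)
  have hn_pos : 0 < n := by
    have := (pairR_pos_iff (hΦ.ne_zero (hS.1 ht))).mpr hpos
    rw [hn] at this
    exact_mod_cast this
  set c : V →₀ ℤ := Finsupp.single s 1 - Finsupp.single t n
  have hc : c ∈ supported ℤ ℤ S :=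
    sub_mem (Finsupp.single_mem_supported ℤ 1 hs) (Finsupp.single_mem_supported ℤ n ht)
  have hcΦ : linearCombination ℤ id c ∈ Φ := by
    convert hΦ.2.2.1 t (hS.1 ht) s (hS.1 hs) using 1
    simp [c, reflV, hn, Int.cast_smul_eq_zsmul]
  have hct := hS.coeff_nonneg_of_pos hc hcΦ (v := s) (by simp [c, hst]) t
  simp [c, hst.symm] at hct
  omega

end IsBase

end RootSystem

section HalfSum

variable {Φ S : Set V}

/-- Otherwise the root would be a multiple of `s`, which reducedness excludes. -/
lemma IsBase.exists_coeff_pos_of_ne (hΦ : IsRootSystem Φ) (hS : IsBase Φ S) {s : V} (hs : s ∈ S)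
    {c : V →₀ ℤ} (hc : ∀ v, 0 ≤ c v) (hcΦ : linearCombination ℤ id c ∈ Φ)
    (hcs : linearCombination ℤ id c ≠ s) : ∃ v ≠ s, 0 < c v := by
  classical
  by_contra! h
  have hc_single : c = Finsupp.single s (c s) := by
    ext v
    by_cases hv : v = s
    · simp [hv]
    · simpa [Finsupp.single_apply, Ne.symm hv] using le_antisymm (h v hv) (hc v)
  have hsmul : linearCombination ℤ id c = (c s : ℝ) • s := by
    rw [hc_single]; simp [Int.cast_smul_eq_zsmul]
  rw [hsmul] at hcΦ hcs
  rcases hΦ.2.2.2.2 s (hS.1 hs) _ hcΦ with h1 | h1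
  · exact hcs h1
  · have hsum : ((c s : ℝ) + 1) • s = 0 := by rw [add_smul, h1]; simp
    have hcs_neg : (c s : ℝ) + 1 = 0 :=
      (smul_eq_zero.mp hsum).resolve_right (hΦ.ne_zero (hS.1 hs))
    have hcs_nonneg : (0 : ℝ) ≤ c s := by exact_mod_cast hc s
    linarith

/-- `reflV s` only changes the coefficient at `s`, so a positive coefficient away from `s`
survives and forces the image to be positive. -/
lemma IsBase.reflV_isPositive (hΦ : IsRootSystem Φ) (hS : IsBase Φ S) {s β : V} (hs : s ∈ S)
    (hβ : β ∈ Φ) (hβpos : IsPositive S β) (hβs : β ≠ s) :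
    IsPositive S (reflV s β) ∧ reflV s β ≠ s := by
  classical
  obtain ⟨c, hc, rfl, hc0⟩ := hβpos.exists_coeff
  obtain ⟨v, hvs, hv⟩ := hS.exists_coeff_pos_of_ne hΦ hs hc0 hβ hβs
  obtain ⟨n, hn⟩ := hΦ.2.2.2.1 s (hS.1 hs) _ hβ
  set d : V →₀ ℤ := c - Finsupp.single s n
  have hd : d ∈ supported ℤ ℤ S := sub_mem hc (Finsupp.single_mem_supported ℤ n hs)
  have hdv : d v = c v := by simp [d, Ne.symm hvs]
  have hrefl : linearCombination ℤ id d = reflV s (linearCombination ℤ id c) := by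
    simp [d, reflV, hn, Int.cast_smul_eq_zsmul]
  rw [← hrefl]
  refine ⟨hS.isPositive_of_coeff_pos hd (hrefl ▸ hΦ.2.2.1 s (hS.1 hs) _ hβ) (hdv ▸ hv), ?_⟩
  intro heq
  have hcoeff := congrArg (· v) (hS.linearCombination_injOn hd
    (Finsupp.single_mem_supported ℤ 1 hs) (by simpa using heq))
  simp only [hdv, Finsupp.single_apply, if_neg (Ne.symm hvs)] at hcoeff
  omega

lemma halfSumPos_eq_sum {Ψ : Set V} (hfin : {α ∈ Ψ | IsPositive S α}.Finite) :
    halfSumPos Ψ S = (2⁻¹ : ℝ) • ∑ β ∈ hfin.toFinset, β := by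
  rw [halfSumPos, finsum_mem_eq_finite_toFinset_sum _ hfin]

/-- `reflV s` permutes the positive roots of `Ψ` other than `s` and sends `s` to `-s`. -/
lemma IsBase.pairR_halfSumPos (hΦ : IsRootSystem Φ) (hS : IsBase Φ S) {Ψ : Set V} (hΨ : Ψ ⊆ Φ)
    {s : V} (hs : s ∈ S) (hsΨ : s ∈ Ψ) (hΨs : ∀ β ∈ Ψ, reflV s β ∈ Ψ) :
    pairR (halfSumPos Ψ S) s = 1 := by
  have hfin : {α ∈ Ψ | IsPositive S α}.Finite := hΦ.1.subset fun β hβ => hΨ hβ.1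
  rw [halfSumPos_eq_sum hfin, pairR_smul, pairR_sum_eq_two _ (hΦ.ne_zero (hS.1 hs))]
  · norm_num
  · exact hfin.mem_toFinset.mpr ⟨hsΨ, hS.isPositive_of_mem hs⟩
  · intro β hβ hβs
    rw [hfin.mem_toFinset] at hβ
    obtain ⟨hpos, hne⟩ := hS.reflV_isPositive hΦ hs (hΨ hβ.1) hβ.2 hβs
    exact ⟨hfin.mem_toFinset.mpr ⟨hΨs β hβ.1, hpos⟩, hne⟩

lemma IsBase.inner_nonpos_of_mem_span (hΦ : IsRootSystem Φ) (hS : IsBase Φ S) {Sp : Set V}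
    (hSp : Sp ⊆ S) {β : V} (hβ : β ∈ Submodule.span ℤ Sp) (hβpos : IsPositive S β) {s : V}
    (hs : s ∈ S) (hsSp : s ∉ Sp) : ⟪β, s⟫ ≤ 0 := by
  obtain ⟨d, hd, rfl⟩ := mem_span_int_iff.mp hβ
  obtain ⟨c, hc, hcd, hc0⟩ := hβpos.exists_coeff
  obtain rfl := hS.linearCombination_injOn hc (Finsupp.supported_mono hSp hd) hcd
  rw [real_inner_comm, inner_linearCombination_right]
  refine Finset.sum_nonpos fun v hv => mul_nonpos_of_nonneg_of_nonpos (by exact_mod_cast hc0 v)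
    (hS.inner_nonpos hΦ hs (hSp (hd hv)) ?_)
  rintro rfl
  exact hsSp (hd hv)

lemma IsBase.inner_halfSumPos_inter_span_nonpos (hΦ : IsRootSystem Φ) (hS : IsBase Φ S)
    {Sp : Set V} (hSp : Sp ⊆ S) {s : V} (hs : s ∈ S) (hsSp : s ∉ Sp) :
    ⟪halfSumPos (Φ ∩ (Submodule.span ℤ Sp : Set V)) S, s⟫ ≤ 0 := by
  have hfin : {α ∈ Φ ∩ (Submodule.span ℤ Sp : Set V) | IsPositive S α}.Finite :=
    hΦ.1.subset fun β hβ => hβ.1.1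
  rw [halfSumPos_eq_sum hfin, real_inner_smul_left, sum_inner]
  refine mul_nonpos_of_nonneg_of_nonpos (by norm_num) (Finset.sum_nonpos fun β hβ => ?_)
  rw [hfin.mem_toFinset] at hβ
  exact hS.inner_nonpos_of_mem_span hΦ hSp hβ.1.2 hβ.2 hs hsSp

end HalfSum

lemma mem_supported_of_inner_eq_zero {S Sp : Set V} {x : V} (hzero : ∀ v ∈ Sp, ⟪x, v⟫ = 0)
    (hpos : ∀ v ∈ S, v ∉ Sp → 0 < ⟪x, v⟫) {c : V →₀ ℤ} (hc : c ∈ supported ℤ ℤ S)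
    (hsign : (∀ v, 0 ≤ c v) ∨ ∀ v, c v ≤ 0) (h : ⟪x, linearCombination ℤ id c⟫ = 0) :
    c ∈ supported ℤ ℤ Sp := by
  wlog hc0 : ∀ v, 0 ≤ c v generalizing c
  · have hneg : ∀ v, 0 ≤ (-c) v := fun v => by simpa using hsign.resolve_left hc0 v
    simpa using neg_mem <| this (neg_mem hc) (Or.inl hneg) (by simp [h]) hneg
  have hterm : ∀ v ∈ c.support, 0 ≤ (c v : ℝ) * ⟪x, v⟫ := by
    intro v hv
    refine mul_nonneg (by exact_mod_cast hc0 v) ?_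
    by_cases hvSp : v ∈ Sp
    · exact (hzero v hvSp).ge
    · exact (hpos v (hc hv) hvSp).le
  rw [inner_linearCombination_right] at h
  intro v hv
  by_contra hvSp
  rcases mul_eq_zero.mp ((Finset.sum_eq_zero_iff_of_nonneg hterm).mp h v hv) with h0 | h0
  · exact Finsupp.mem_support_iff.mp hv (by exact_mod_cast h0)
  · exact (hpos v (hc hv) hvSp).ne' h0

theorem stmt11_general {V : Type*} [NormedAddCommGroup V] [InnerProductSpace ℝ V]
    (Φ S Sp : Set V)
    (hΦ : IsRootSystem Φ) (hS : IsBase Φ S) (hSp : Sp ⊆ S) :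
    ∀ α ∈ Φ,
      pairR (halfSumPos Φ S - halfSumPos (Φ ∩ (Submodule.span ℤ Sp : Set V)) S) α = 0 →
      α ∈ Φ ∩ (Submodule.span ℤ Sp : Set V) := by
  intro α hα hpair
  set Φp := Φ ∩ (Submodule.span ℤ Sp : Set V)
  have hρ : ∀ s ∈ S, pairR (halfSumPos Φ S) s = 1 := fun s hs =>
    hS.pairR_halfSumPos hΦ subset_rfl hs (hS.1 hs) fun β hβ => hΦ.2.2.1 s (hS.1 hs) β hβ
  have hzero : ∀ s ∈ Sp, ⟪halfSumPos Φ S - halfSumPos Φp S, s⟫ = 0 := by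
    intro s hs
    have hsΦp : s ∈ Φp := ⟨hS.1 (hSp hs), Submodule.subset_span hs⟩
    have hρp := hS.pairR_halfSumPos hΦ Set.inter_subset_left (hSp hs) hsΦp
      fun β hβ => hΦ.reflV_mem_inter_span hsΦp hβ
    rw [← pairR_eq_zero_iff (hΦ.ne_zero hsΦp.1), pairR_sub, hρ s (hSp hs), hρp, sub_self]
  have hpos : ∀ s ∈ S, s ∉ Sp → 0 < ⟪halfSumPos Φ S - halfSumPos Φp S, s⟫ := by
    intro s hs hsSp
    have hρs : 0 < ⟪halfSumPos Φ S, s⟫ :=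
      (pairR_pos_iff (hΦ.ne_zero (hS.1 hs))).mp (by rw [hρ s hs]; norm_num)
    rw [inner_sub_left]
    linarith [hS.inner_halfSumPos_inter_span_nonpos hΦ hSp hs hsSp]
  obtain ⟨c, hc, rfl, hsign⟩ := hS.exists_coeff hα
  refine ⟨hα, mem_span_int_iff.mpr ⟨c, mem_supported_of_inner_eq_zero hzero hpos hc hsign ?_, rfl⟩⟩
  exact (pairR_eq_zero_iff (hΦ.ne_zero hα)).mp hpair

/-- with `Φᵖ = Φ ∩ ℤSᵖ`, `ρ` and `ρᵖ` the half-sums of positive roots of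
`Φ` and `Φᵖ`, every root `α ∈ Φ` with `⟨ρ - ρᵖ | α∨⟩ = 0` lies in `Φᵖ`. -/
theorem stmt11 {V : Type*} [NormedAddCommGroup V] [InnerProductSpace ℝ V]
    [FiniteDimensional ℝ V] (Φ S Sp : Set V)
    (hΦ : IsRootSystem Φ) (hS : IsBase Φ S) (hSp : Sp ⊆ S) :
    ∀ α ∈ Φ,
      pairR (halfSumPos Φ S - halfSumPos (Φ ∩ (Submodule.span ℤ Sp : Set V)) S) α = 0 →
      α ∈ Φ ∩ (Submodule.span ℤ Sp : Set V) :=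
  stmt11_general Φ S Sp hΦ hS hSp
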